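/- arXiv:1811.05833 — 3 statements merged into one kernel-verified Lean document; each statement's English description precedes it below -/
import Mathlib

section
/- Let γ > 1 and let R, Q be positive real numbers. Then there exists a unique real number Z with R ≤ Z satisfying Q = (1 - R/Z) · Z^γ; moreover this Z satisfies R < Z. -/
/-! Multiplying out, `(1 - R / Z) * Z ^ γ = Z ^ (γ - 1) * (Z - R)` for `Z > 0`. On `[R, ∞)` the
right-hand side is a product of a nondecreasing nonnegative factor and a strictly increasing one
vanishing at `R`, so it increases strictly from `0` to `∞`; the intermediate value theorem gives
exactly one root of `Q = …`, and it is not `R` because `Q > 0`. -/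

namespace Real

theorem one_sub_div_mul_rpow {R Z : ℝ} (hZ : 0 < Z) (γ : ℝ) :
    (1 - R / Z) * Z ^ γ = Z ^ (γ - 1) * (Z - R) := by
  have hsplit : Z ^ γ = Z ^ (γ - 1) * Z := by
    rw [← rpow_add_one hZ.ne', sub_add_cancel]
  rw [hsplit]
  field_simp

theorem strictMonoOn_rpow_mul_sub {p R : ℝ} (hp : 0 ≤ p) (hR : 0 ≤ R) :
    StrictMonoOn (fun Z : ℝ => Z ^ p * (Z - R)) (Set.Ici R) := by
  intro a ha b _ hab
  have ha0 : 0 ≤ a := hR.trans ha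
  calc a ^ p * (a - R) ≤ b ^ p * (a - R) :=
        mul_le_mul_of_nonneg_right (rpow_le_rpow ha0 hab.le hp) (sub_nonneg.mpr ha)
    _ < b ^ p * (b - R) :=
        mul_lt_mul_of_pos_left (by linarith) (rpow_pos_of_pos (ha0.trans_lt hab) p)

theorem exists_rpow_mul_sub_eq {p R Q : ℝ} (hp : 0 ≤ p) (hQ : 0 ≤ Q) :
    ∃ Z, R ≤ Z ∧ Z ^ p * (Z - R) = Q := by
  set M := max 1 R + Q
  have hRM : R ≤ M := by linarith [le_max_right 1 R]
  have hM1 : 1 ≤ M := by linarith [le_max_left 1 R]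
  have hQM : Q ≤ M ^ p * (M - R) := by
    calc Q ≤ 1 * (M - R) := by linarith [le_max_right 1 R]
      _ ≤ M ^ p * (M - R) :=
          mul_le_mul_of_nonneg_right (one_le_rpow hM1 hp) (sub_nonneg.mpr hRM)
  have hcont : ContinuousOn (fun Z : ℝ => Z ^ p * (Z - R)) (Set.Icc R M) :=
    ((continuous_id.rpow_const fun _ => Or.inr hp).mul
      (continuous_id.sub continuous_const)).continuousOn
  obtain ⟨Z, hZ, hZQ⟩ := intermediate_value_Icc hRM hcont (by simpa using ⟨hQ, hQM⟩)
  exact ⟨Z, hZ.1, hZQ⟩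

end Real

theorem stmt_0 (γ R Q : ℝ) (hγ : 1 < γ) (hR : 0 < R) (hQ : 0 < Q) :
    (∃! Z : ℝ, R ≤ Z ∧ Q = (1 - R / Z) * Z ^ γ) ∧
    (∀ Z : ℝ, R ≤ Z → Q = (1 - R / Z) * Z ^ γ → R < Z) := by
  have hp : 0 ≤ γ - 1 := by linarith
  have hclosure : ∀ Z, R ≤ Z → (1 - R / Z) * Z ^ γ = Z ^ (γ - 1) * (Z - R) := fun Z hZ =>
    Real.one_sub_div_mul_rpow (hR.trans_le hZ) γ
  obtain ⟨Z, hRZ, hZQ⟩ := Real.exists_rpow_mul_sub_eq (R := R) hp hQ.le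
  refine ⟨⟨Z, ⟨hRZ, by rw [hclosure Z hRZ, hZQ]⟩, ?_⟩, ?_⟩
  · rintro W ⟨hRW, hWQ⟩
    refine (Real.strictMonoOn_rpow_mul_sub hp hR.le).injOn hRW hRZ ?_
    simp only [← hclosure W hRW, ← hWQ, hZQ]
  · intro W hRW hWQ
    refine hRW.lt_of_ne fun hRW' => hQ.ne' ?_
    rw [hWQ, hclosure W hRW, ← hRW', sub_self, mul_zero]
end

section
/- Let γ > 1, γ₊ > 1, and let R₀, Q₀, τ₀ > 0. Let Z(τ) be the differentiable implicit solution of Q₀τ₀τ^{-1} = (1 - R₀τ₀τ^{-1}/Z) Z^γ with R₀τ₀τ^{-1} < Z. Then the map τ ↦ Z(τ)^{γ₊} is strictly decreasing on (0,∞). -/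
/-!
Multiplying the closure by `τ` solves it for the specific volume:
`τ = Q₀τ₀ Z^{-γ} + R₀τ₀ Z^{-1}`, a decreasing function of `Z > 0`. A function with a decreasing
left inverse is strictly decreasing, so `Z` is, and so is `Z^{γ₊}`.
-/

open Set

theorem AntitoneOn.strictAntiOn_of_leftInvOn {α β : Type*} [Preorder α] [LinearOrder β]
    {f : α → β} {g : β → α} {s : Set α} {t : Set β} (hg : AntitoneOn g t) (hf : MapsTo f s t)
    (hgf : LeftInvOn g f s) : StrictAntiOn f s := by
  intro a ha b hb hab
  by_contra! hle
  have : g (f b) ≤ g (f a) := hg (hf ha) (hf hb) hle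
  rw [hgf hb, hgf ha] at this
  exact hab.not_ge this

noncomputable def closureVolume (A B γ z : ℝ) : ℝ := A / z ^ γ + B / z

theorem closureVolume_antitoneOn {A B γ : ℝ} (hA : 0 ≤ A) (hB : 0 ≤ B) (hγ : 0 ≤ γ) :
    AntitoneOn (closureVolume A B γ) (Ioi 0) := by
  intro y (hy : 0 < y) z _ hyz
  unfold closureVolume
  gcongr

theorem closureVolume_eq {A B γ τ z : ℝ} (hτ : 0 < τ) (hz : 0 < z)
    (h : A / τ = (1 - B / τ / z) * z ^ γ) : closureVolume A B γ z = τ := by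
  have hzγ : 0 < z ^ γ := Real.rpow_pos_of_pos hz γ
  unfold closureVolume
  field_simp at h ⊢
  linarith

theorem stmt_4_general (γ γp R₀ Q₀ τ₀ : ℝ) (hγ : 1 < γ) (hγp : 1 < γp)
    (hR₀ : 0 < R₀) (hQ₀ : 0 < Q₀) (hτ₀ : 0 < τ₀)
    (Z : ℝ → ℝ)
    (hlt : ∀ τ > 0, R₀ * τ₀ / τ < Z τ)
    (heq : ∀ τ > 0, Q₀ * τ₀ / τ = (1 - (R₀ * τ₀ / τ) / Z τ) * (Z τ) ^ γ) :
    StrictAntiOn (fun τ => (Z τ) ^ γp) (Set.Ioi (0 : ℝ)) := by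
  have hZpos : MapsTo Z (Ioi 0) (Ioi 0) := fun τ (hτ : 0 < τ) =>
    (div_pos (mul_pos hR₀ hτ₀) hτ).trans (hlt τ hτ)
  have hvol : AntitoneOn (closureVolume (Q₀ * τ₀) (R₀ * τ₀) γ) (Ioi 0) :=
    closureVolume_antitoneOn (mul_pos hQ₀ hτ₀).le (mul_pos hR₀ hτ₀).le (by linarith)
  have hZanti : StrictAntiOn Z (Ioi 0) :=
    hvol.strictAntiOn_of_leftInvOn hZpos fun τ hτ => closureVolume_eq hτ (hZpos hτ) (heq τ hτ)
  have hpow : StrictMonoOn (fun z : ℝ => z ^ γp) (Ioi 0) :=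
    (Real.strictMonoOn_rpow_Ici_of_exponent_pos (by linarith)).mono Ioi_subset_Ici_self
  exact hpow.comp_strictAntiOn hZanti hZpos

theorem stmt_4 (γ γp R₀ Q₀ τ₀ : ℝ) (hγ : 1 < γ) (hγp : 1 < γp)
    (hR₀ : 0 < R₀) (hQ₀ : 0 < Q₀) (hτ₀ : 0 < τ₀)
    (Z : ℝ → ℝ)
    (hlt : ∀ τ > 0, R₀ * τ₀ / τ < Z τ)
    (hdiff : ∀ τ > 0, DifferentiableAt ℝ Z τ)
    (heq : ∀ τ > 0, Q₀ * τ₀ / τ = (1 - (R₀ * τ₀ / τ) / Z τ) * (Z τ) ^ γ) :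
    StrictAntiOn (fun τ => (Z τ) ^ γp) (Set.Ioi (0 : ℝ)) :=
  stmt_4_general γ γp R₀ Q₀ τ₀ hγ hγp hR₀ hQ₀ hτ₀ Z hlt heq
end

section
/- Let γ > 1. For positive reals R, Q let Z(R,Q) ≥ R be the unique solution of Q = (1 - R/Z)Z^γ. Fix Q > 0. Then Z(R,Q) → ∞ as R → ∞, and for fixed R > 0, Z(R,Q) → ∞ as Q → ∞. In particular, if R + Q → ∞ then Z(R,Q) → ∞. -/
/-! Since `0 ≤ 1 - R / Z ≤ 1`, the defining equation gives `Q ≤ Z ^ γ`, besides `R ≤ Z`;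
so `Z ≤ c` forces `R + Q ≤ c + c ^ γ`, and `Z` is large whenever `R + Q` is. -/

open Filter

theorem Filter.Tendsto.atTop_of_le_of_le_rpow {α : Type*} {l : Filter α} {γ : ℝ} (hγ : 0 < γ)
    {R Q Z : α → ℝ} (hZ : ∀ᶠ x in l, 0 ≤ Z x) (hRZ : ∀ᶠ x in l, R x ≤ Z x)
    (hQZ : ∀ᶠ x in l, Q x ≤ Z x ^ γ) (h : Tendsto (fun x => R x + Q x) l atTop) :
    Tendsto Z l atTop := by
  refine tendsto_atTop.2 fun b => ?_
  set c := max b 0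
  filter_upwards [h.eventually_gt_atTop (c + c ^ γ), hZ, hRZ, hQZ] with x hsum hZx hRx hQx
  by_contra! hlt
  have hZc : Z x ≤ c := hlt.le.trans (le_max_left b 0)
  have hpow : Z x ^ γ ≤ c ^ γ := Real.rpow_le_rpow hZx hZc hγ.le
  linarith

theorem le_rpow_of_eq_one_sub_div_mul_rpow {R Q Z γ : ℝ} (hR : 0 ≤ R) (hZ : 0 ≤ Z)
    (hQ : Q = (1 - R / Z) * Z ^ γ) : Q ≤ Z ^ γ := by
  rw [hQ]
  exact mul_le_of_le_one_left (Real.rpow_nonneg hZ γ)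
    (sub_le_self 1 (div_nonneg hR hZ))

theorem stmt_18 (γ : ℝ) (hγ : 1 < γ) (Z : ℝ → ℝ → ℝ)
    (hZ : ∀ R Q : ℝ, 0 < R → 0 < Q →
      R ≤ Z R Q ∧ Q = (1 - R / Z R Q) * (Z R Q) ^ γ) :
    (∀ Q > (0 : ℝ), Filter.Tendsto (fun R => Z R Q) Filter.atTop Filter.atTop) ∧
    (∀ R > (0 : ℝ), Filter.Tendsto (fun Q => Z R Q) Filter.atTop Filter.atTop) ∧
    (∀ R Q : ℕ → ℝ, (∀ n, 0 < R n) → (∀ n, 0 < Q n) →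
      Filter.Tendsto (fun n => R n + Q n) Filter.atTop Filter.atTop →
      Filter.Tendsto (fun n => Z (R n) (Q n)) Filter.atTop Filter.atTop) := by
  have coercive : ∀ {α : Type} {l : Filter α} {R Q : α → ℝ}, (∀ᶠ x in l, 0 < R x) →
      (∀ᶠ x in l, 0 < Q x) → Tendsto (fun x => R x + Q x) l atTop →
      Tendsto (fun x => Z (R x) (Q x)) l atTop := by
    intro α l R Q hR hQ hsum
    have hRZ : ∀ᶠ x in l, R x ≤ Z (R x) (Q x) := by
      filter_upwards [hR, hQ] with x hRx hQx using (hZ _ _ hRx hQx).1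
    have hZ0 : ∀ᶠ x in l, 0 ≤ Z (R x) (Q x) := by
      filter_upwards [hR, hRZ] with x hRx hRZx using hRx.le.trans hRZx
    refine hsum.atTop_of_le_of_le_rpow (by linarith) hZ0 hRZ ?_
    filter_upwards [hR, hQ, hZ0] with x hRx hQx hZx using
      le_rpow_of_eq_one_sub_div_mul_rpow hRx.le hZx (hZ _ _ hRx hQx).2
  refine ⟨fun Q hQ => ?_, fun R hR => ?_, fun R Q hR hQ hsum => ?_⟩
  · exact coercive (eventually_gt_atTop 0) (.of_forall fun _ => hQ)
      (tendsto_atTop_add_const_right _ Q tendsto_id)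
  · exact coercive (.of_forall fun _ => hR) (eventually_gt_atTop 0)
      (tendsto_atTop_add_const_left _ R tendsto_id)
  · exact coercive (.of_forall hR) (.of_forall hQ) hsum
end
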